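/- Let α > −1, let ω be a weight on the upper half-plane H, and let Φ be a normalized Young function satisfying the Δ₂ condition with constant K. Then there is a constant C > 0, depending only on K, such that for every compactly supported measurable function f and every λ > 0, |{z ∈ H : M^d_{Φ,ω,α} f(z) > λ}|_{ω,α} ≤ C ∫_{{z ∈ H : |f(z)| > λ/2}} Φ(|f(z)|/λ) ω(z) dV_α(z). -/

import Mathlib

open MeasureTheory Set Filter
open scoped ENNReal NNReal

noncomputable section

/-- The upper half-plane `H = {z : 0 < Im z}`. -/
def UHP : Set ℂ := {z : ℂ | 0 < z.im}

/-- The measure `dV_α = y^α dx dy` supported on the upper half-plane. -/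
def Vm (α : ℝ) : Measure ℂ :=
  MeasureTheory.volume.withDensity
    (fun z => if 0 < z.im then ENNReal.ofReal (z.im ^ α) else 0)

/-- The Carleson square `Q_I` attached to the interval `I = (a, b)`. -/
def Qbox (a b : ℝ) : Set ℂ :=
  {z : ℂ | z.re ∈ Set.Ioo a b ∧ z.im ∈ Set.Ioo 0 (b - a)}

/-- The weighted measure `|E|_{ω,α} = ∫_E ω dV_α` of a set `E`. -/
def wvol (α : ℝ) (ω : ℂ → ℝ) (E : Set ℂ) : ℝ≥0∞ :=
  ∫⁻ z in E, ENNReal.ofReal (ω z) ∂(Vm α)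

/-- A weight: a nonnegative locally integrable function on the upper half-plane. -/
def IsWeight (α : ℝ) (ω : ℂ → ℝ) : Prop :=
  Measurable ω ∧ (∀ z, 0 ≤ ω z) ∧ MeasureTheory.LocallyIntegrableOn ω UHP (Vm α)

/-- A normalized Young function: continuous, convex, increasing on `[0,∞)`,
with `Φ 0 = 0`, `Φ 1 = 1` and `Φ t → ∞` as `t → ∞`. -/
structure IsNormalizedYoung (Φ : ℝ → ℝ) : Prop where
  cont : ContinuousOn Φ (Set.Ici 0)
  convex : ConvexOn ℝ (Set.Ici 0) Φ
  mono : MonotoneOn Φ (Set.Ici 0)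
  map_zero : Φ 0 = 0
  map_one : Φ 1 = 1
  tendsto_atTop : Filter.Tendsto Φ Filter.atTop Filter.atTop

/-- The `Δ₂` (doubling) condition with constant `K`. -/
def Delta2 (Φ : ℝ → ℝ) (K : ℝ) : Prop :=
  1 < K ∧ ∀ t : ℝ, 0 ≤ t → Φ (2 * t) ≤ K * Φ t

/-- The class `B_p`: `Δ₂` together with `∫_c^∞ Φ(t)/t^p dt/t < ∞` for some `c > 0`. -/
def InBp (Φ : ℝ → ℝ) (p : ℝ) : Prop :=
  (∃ K : ℝ, Delta2 Φ K) ∧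
    ∃ c : ℝ, 0 < c ∧ (∫⁻ t in Set.Ioi c, ENNReal.ofReal (Φ t / t ^ (p + 1))) < ⊤

/-- The Luxemburg norm `‖f‖_{Q_I, Φ, ω, α}` over the Carleson square of `I = (a,b)`. -/
def luxNorm (α : ℝ) (Φ : ℝ → ℝ) (ω : ℂ → ℝ) (a b : ℝ) (f : ℂ → ℂ) : ℝ≥0∞ :=
  ⨅ (t : ℝ) (_ : 0 < t)
    (_ : (∫⁻ z in Qbox a b, ENNReal.ofReal (Φ (‖f z‖ / t) * ω z) ∂(Vm α)) /
          wvol α ω (Qbox a b) ≤ 1),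
    ENNReal.ofReal t

/-- The maximal function `M_{Φ,ω,α} f`. -/
def maxFn (α : ℝ) (Φ : ℝ → ℝ) (ω : ℂ → ℝ) (f : ℂ → ℂ) (z : ℂ) : ℝ≥0∞ :=
  ⨆ (a : ℝ) (b : ℝ) (_ : z ∈ Qbox a b), luxNorm α Φ ω a b f

/-- The dyadic grid `D^β`, as a set of pairs of endpoints. -/
def dyadicGrid (β : ℝ) : Set (ℝ × ℝ) :=
  {I : ℝ × ℝ | ∃ j m : ℤ, I.1 = (2 : ℝ) ^ j * (m + (-1 : ℝ) ^ j * β) ∧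
    I.2 = (2 : ℝ) ^ j * (m + 1 + (-1 : ℝ) ^ j * β)}

/-- The dyadic maximal function `M^{d,β}_{Φ,ω,α} f`. -/
def dyadicMax (β α : ℝ) (Φ : ℝ → ℝ) (ω : ℂ → ℝ) (f : ℂ → ℂ) (z : ℂ) : ℝ≥0∞ :=
  ⨆ (I : ℝ × ℝ) (_ : I ∈ dyadicGrid β) (_ : z ∈ Qbox I.1 I.2),
    luxNorm α Φ ω I.1 I.2 f

/-- The Hardy–Littlewood maximal function `M_α g` of the upper half-plane. -/
def hlMax (α : ℝ) (g : ℂ → ℝ) (z : ℂ) : ℝ≥0∞ :=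
  ⨆ (a : ℝ) (b : ℝ) (_ : z ∈ Qbox a b),
    (∫⁻ w in Qbox a b, ENNReal.ofReal |g w| ∂(Vm α)) / Vm α (Qbox a b)

/-- The weighted Hardy–Littlewood maximal function `M_{ω,α} f`. -/
def whlMax (α : ℝ) (ω : ℂ → ℝ) (f : ℂ → ℂ) (z : ℂ) : ℝ≥0∞ :=
  ⨆ (a : ℝ) (b : ℝ) (_ : z ∈ Qbox a b),
    (∫⁻ w in Qbox a b, ENNReal.ofReal (‖f w‖ * ω w) ∂(Vm α)) /
      wvol α ω (Qbox a b)

/-- The Békollè–Bonami constant `[ω]_{B_{p,α}}`. -/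
def BBnorm (α p : ℝ) (ω : ℂ → ℝ) : ℝ≥0∞ :=
  ⨆ (a : ℝ) (b : ℝ) (_ : a < b),
    (wvol α ω (Qbox a b) / Vm α (Qbox a b)) *
      ((∫⁻ z in Qbox a b, ENNReal.ofReal (ω z) ^ (1 - p / (p - 1)) ∂(Vm α)) /
          Vm α (Qbox a b)) ^ (p - 1)

/-- Membership in the Békollè–Bonami class `B_{p,α}`. -/
def InBB (α p : ℝ) (ω : ℂ → ℝ) : Prop := BBnorm α p ω < ⊤

/-- Membership in `𝔹_{∞,α} = ⋃_{p>1} B_{p,α}`. -/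
def InBBinfty (α : ℝ) (ω : ℂ → ℝ) : Prop := ∃ p : ℝ, 1 < p ∧ InBB α p ω

/-- The quantity `∫_H |f|^p ω dV_α`. -/
def lpInt (α p : ℝ) (ω : ℂ → ℝ) (f : ℂ → ℂ) : ℝ≥0∞ :=
  ∫⁻ z, ENNReal.ofReal (‖f z‖) ^ p * ENNReal.ofReal (ω z) ∂(Vm α)

/-- The function `K_μ(z) = sup_{I : z ∈ Q_I} μ(Q_I)/|Q_I|_{ω,α}`. -/
def Kmu (α : ℝ) (ω : ℂ → ℝ) (μ : Measure ℂ) (z : ℂ) : ℝ≥0∞ :=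
  ⨆ (a : ℝ) (b : ℝ) (_ : z ∈ Qbox a b), μ (Qbox a b) / wvol α ω (Qbox a b)

/-- `ω` is `α`-doubling with doubling function `φ` and constant `K`. -/
structure AlphaDoubling (α : ℝ) (ω : ℂ → ℝ) (φ : ℝ≥0∞ → ℝ≥0∞) (K : ℝ≥0∞) : Prop where
  mono : Monotone φ
  map_one : φ 1 = 1
  one_le : 1 ≤ K
  bound : ∀ a b : ℝ, ∀ E ⊆ Qbox a b, MeasurableSet E →
    wvol α ω (Qbox a b) / wvol α ω E ≤ K * φ (Vm α (Qbox a b) / Vm α E)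

/-- The complementary (conjugate) Young function `Ψ(s) = sup_{t ≥ 0} (t s − Φ(t))`,
valued in `ℝ≥0∞`. -/
def conjugateYoung (Φ : ℝ → ℝ) (s : ℝ) : ℝ≥0∞ :=
  ⨆ (t : ℝ) (_ : 0 ≤ t), ENNReal.ofReal (t * s - Φ t)

/-- The unweighted Luxemburg norm for an `ℝ≥0∞`-valued Young function. -/
def luxNormE (α : ℝ) (Ψ : ℝ → ℝ≥0∞) (a b : ℝ) (g : ℂ → ℝ) : ℝ≥0∞ :=
  ⨅ (t : ℝ) (_ : 0 < t)
    (_ : (∫⁻ z in Qbox a b, Ψ (|g z| / t) ∂(Vm α)) / Vm α (Qbox a b) ≤ 1),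
    ENNReal.ofReal t

/-- The Békollè–Bonami `B_{∞,α}` constant
`[ω]_{B_{∞,α}} = sup_I |Q_I|_{ω,α}⁻¹ ∫_{Q_I} M_α(ω χ_{Q_I}) dV_α`. -/
def BBinftyNorm (α : ℝ) (ω : ℂ → ℝ) : ℝ≥0∞ :=
  ⨆ (a : ℝ) (b : ℝ) (_ : a < b),
    (∫⁻ z in Qbox a b, hlMax α ((Qbox a b).indicator ω) z ∂(Vm α)) /
      wvol α ω (Qbox a b)

end

/-! Call a dyadic Carleson square `Q` *bad* if the `Φ`-average of `|f|/λ` over `Q` exceeds `1`.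
Every point of `{M^d f > λ}` lies in a bad square. Since `Φ(s) ≤ s` on `[0,1]`, the part of `Q`
where `|f| ≤ λ/2` contributes at most `|Q|_{ω,α}/2` to that average, so a bad square satisfies
`|Q|_{ω,α} ≤ 2 ∫_{Q ∩ {|f| > λ/2}} Φ(|f|/λ) ω dV_α`. Summing over the maximal bad squares, which
are pairwise disjoint, gives the estimate with `C = 2`; the maximal squares exist after a
truncation of the scales, which is removed by monotone convergence. -/

noncomputable section

def dyadicSquare (p : ℤ × ℤ) : Set ℂ := Qbox (2 ^ p.1 * p.2) (2 ^ p.1 * (p.2 + 1))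

def phiAverage (α : ℝ) (Φ : ℝ → ℝ) (ω : ℂ → ℝ) (f : ℂ → ℂ) (t : ℝ) (Q : Set ℂ) : ℝ≥0∞ :=
  (∫⁻ z in Q, ENNReal.ofReal (Φ (‖f z‖ / t) * ω z) ∂(Vm α)) / wvol α ω Q

end

instance (α : ℝ) : SFinite (Vm α) := by
  unfold Vm
  infer_instance

lemma measurableSet_Qbox (a b : ℝ) : MeasurableSet (Qbox a b) :=
  (measurableSet_Ioo.preimage Complex.measurable_re).inter
    (measurableSet_Ioo.preimage Complex.measurable_im)

lemma measurableSet_dyadicSquare (p : ℤ × ℤ) : MeasurableSet (dyadicSquare p) :=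
  measurableSet_Qbox _ _

lemma mem_dyadicSquare {p : ℤ × ℤ} {z : ℂ} :
    z ∈ dyadicSquare p ↔ (2 ^ p.1 * p.2 < z.re ∧ z.re < 2 ^ p.1 * (p.2 + 1)) ∧
      0 < z.im ∧ z.im < (2 : ℝ) ^ p.1 := by
  have h : (2 : ℝ) ^ p.1 * (p.2 + 1) - 2 ^ p.1 * p.2 = 2 ^ p.1 := by ring
  simp [dyadicSquare, Qbox, h, and_assoc]

lemma center_mem_dyadicSquare (p : ℤ × ℤ) :
    (⟨2 ^ p.1 * (p.2 + 1 / 2), 2 ^ p.1 * (3 / 4)⟩ : ℂ) ∈ dyadicSquare p := by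
  have h : (0 : ℝ) < 2 ^ p.1 := by positivity
  refine mem_dyadicSquare.2 ⟨⟨?_, ?_⟩, ?_, ?_⟩ <;> dsimp only <;> nlinarith

lemma dyadicSquare_subset_or_disjoint {p q : ℤ × ℤ} (h : p.1 ≤ q.1) :
    dyadicSquare p ⊆ dyadicSquare q ∨ Disjoint (dyadicSquare p) (dyadicSquare q) := by
  obtain ⟨k, hscale⟩ : ∃ k : ℤ, (2 : ℝ) ^ q.1 = 2 ^ p.1 * k := by
    obtain ⟨n, hn⟩ := Int.eq_ofNat_of_zero_le (sub_nonneg.2 h)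
    refine ⟨2 ^ n, ?_⟩
    rw [show q.1 = p.1 + n by omega, zpow_add₀ two_ne_zero, zpow_natCast]
    push_cast
    ring
  have hpos : (0 : ℝ) < 2 ^ p.1 := by positivity
  by_cases hc : k * q.2 ≤ p.2 ∧ p.2 + 1 ≤ k * (q.2 + 1)
  · left
    intro z hz
    obtain ⟨⟨h1, h2⟩, h3, h4⟩ := mem_dyadicSquare.1 hz
    have c1 : (k : ℝ) * q.2 ≤ p.2 := by exact_mod_cast hc.1
    have c2 : (p.2 : ℝ) + 1 ≤ k * (q.2 + 1) := by exact_mod_cast hc.2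
    have hle : (2 : ℝ) ^ p.1 ≤ 2 ^ q.1 := zpow_le_zpow_right₀ one_le_two h
    refine mem_dyadicSquare.2 ⟨⟨?_, ?_⟩, h3, h4.trans_le hle⟩ <;> rw [hscale] <;> nlinarith
  · right
    refine Set.disjoint_left.2 fun z hz hz' => ?_
    obtain ⟨⟨h1, h2⟩, -⟩ := mem_dyadicSquare.1 hz
    obtain ⟨⟨h1', h2'⟩, -⟩ := mem_dyadicSquare.1 hz'
    rw [hscale] at h1' h2'
    rcases not_and_or.1 hc with hc | hc
    · have c : (p.2 : ℝ) + 1 ≤ k * q.2 := by exact_mod_cast (by omega : p.2 + 1 ≤ k * q.2)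
      nlinarith
    · have c : (k : ℝ) * (q.2 + 1) ≤ p.2 := by
        exact_mod_cast (by omega : k * (q.2 + 1) ≤ p.2)
      nlinarith

lemma le_of_dyadicSquare_subset {p q : ℤ × ℤ} (h : dyadicSquare p ⊆ dyadicSquare q) :
    p.1 ≤ q.1 := by
  obtain ⟨-, -, hz⟩ := mem_dyadicSquare.1 (h (center_mem_dyadicSquare p))
  by_contra! hlt
  have hle : (2 : ℝ) ^ q.1 ≤ 2 ^ (p.1 - 1) := zpow_le_zpow_right₀ one_le_two (by omega)
  rw [zpow_sub₀ two_ne_zero, zpow_one] at hle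
  have : (0 : ℝ) < 2 ^ p.1 := by positivity
  dsimp only at hz
  linarith

lemma eq_of_dyadicSquare_subset {p q : ℤ × ℤ} (h : dyadicSquare p ⊆ dyadicSquare q)
    (hpq : p.1 = q.1) : p = q := by
  obtain ⟨⟨h1, h2⟩, -⟩ := mem_dyadicSquare.1 (h (center_mem_dyadicSquare p))
  dsimp only at h1 h2
  rw [← hpq] at h1 h2
  have hpos : (0 : ℝ) < 2 ^ p.1 := by positivity
  have c1 : (q.2 : ℝ) < p.2 + 1 := by nlinarith
  have c2 : (p.2 : ℝ) < q.2 + 1 := by nlinarith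
  have d1 : q.2 < p.2 + 1 := by exact_mod_cast c1
  have d2 : p.2 < q.2 + 1 := by exact_mod_cast c2
  exact Prod.ext hpq (by omega)

lemma exists_maximal_dyadicSquare {P : ℤ × ℤ → Prop} {N : ℤ} (hN : ∀ p, P p → p.1 ≤ N)
    {p : ℤ × ℤ} (hp : P p) :
    ∃ q, P q ∧ dyadicSquare p ⊆ dyadicSquare q ∧
      ∀ r, P r → dyadicSquare q ⊆ dyadicSquare r → r = q := by
  obtain ⟨j, ⟨q, hq, rfl, hpq⟩, hmax⟩ := Int.exists_greatest_of_bdd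
    (P := fun j => ∃ q, P q ∧ q.1 = j ∧ dyadicSquare p ⊆ dyadicSquare q)
    ⟨N, fun _ ⟨q, hq, hj, _⟩ => hj ▸ hN q hq⟩ ⟨p.1, p, hp, rfl, subset_rfl⟩
  refine ⟨q, hq, hpq, fun r hr hqr => (eq_of_dyadicSquare_subset hqr ?_).symm⟩
  exact le_antisymm (le_of_dyadicSquare_subset hqr) (hmax r.1 ⟨r, hr, rfl, hpq.trans hqr⟩)

lemma measure_biUnion_dyadicSquare_le_of_bdd {ν μ : Measure ℂ} {P : ℤ × ℤ → Prop} {N : ℤ}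
    (hN : ∀ p, P p → p.1 ≤ N) (h : ∀ p, P p → ν (dyadicSquare p) ≤ μ (dyadicSquare p)) :
    ν (⋃ p ∈ {p | P p}, dyadicSquare p) ≤ μ (⋃ p ∈ {p | P p}, dyadicSquare p) := by
  set T := {q | P q ∧ ∀ r, P r → dyadicSquare q ⊆ dyadicSquare r → r = q}
  have hcover : ⋃ p ∈ {p | P p}, dyadicSquare p ⊆ ⋃ q ∈ T, dyadicSquare q := by
    refine Set.iUnion₂_subset fun p hp => ?_
    obtain ⟨q, hq, hpq, hmax⟩ := exists_maximal_dyadicSquare hN hp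
    exact hpq.trans (Set.subset_biUnion_of_mem (u := dyadicSquare) ⟨hq, hmax⟩)
  have hdisj : T.PairwiseDisjoint dyadicSquare := by
    have hle_disj : ∀ p ∈ T, ∀ q ∈ T, p ≠ q → p.1 ≤ q.1 →
        Disjoint (dyadicSquare p) (dyadicSquare q) := fun p hp q hq hpq hle =>
      (dyadicSquare_subset_or_disjoint hle).resolve_left fun hsub => hpq (hp.2 q hq.1 hsub).symm
    intro p hp q hq hpq
    rcases le_total p.1 q.1 with hle | hle
    · exact hle_disj p hp q hq hpq hle
    · exact (hle_disj q hq p hp hpq.symm hle).symm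
  calc ν (⋃ p ∈ {p | P p}, dyadicSquare p) ≤ ν (⋃ q ∈ T, dyadicSquare q) := measure_mono hcover
    _ ≤ ∑' q : T, ν (dyadicSquare q) := measure_biUnion_le ν T.to_countable _
    _ ≤ ∑' q : T, μ (dyadicSquare q) := ENNReal.tsum_le_tsum fun q => h q q.2.1
    _ = μ (⋃ q ∈ T, dyadicSquare q) :=
      (measure_biUnion T.to_countable hdisj fun q _ => measurableSet_dyadicSquare q).symm
    _ ≤ μ (⋃ p ∈ {p | P p}, dyadicSquare p) :=
      measure_mono (Set.biUnion_subset_biUnion_left fun q hq => hq.1)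

lemma measure_biUnion_dyadicSquare_le {ν μ : Measure ℂ} {P : ℤ × ℤ → Prop}
    (h : ∀ p, P p → ν (dyadicSquare p) ≤ μ (dyadicSquare p)) :
    ν (⋃ p ∈ {p | P p}, dyadicSquare p) ≤ μ (⋃ p ∈ {p | P p}, dyadicSquare p) := by
  set S : ℕ → Set ℂ := fun N => ⋃ p ∈ {p | P p ∧ p.1 ≤ N}, dyadicSquare p
  have hS : ⋃ p ∈ {p | P p}, dyadicSquare p = ⋃ N, S N := by
    ext z
    simp only [S, Set.mem_iUnion, Set.mem_ofPred_eq, exists_prop]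
    exact ⟨fun ⟨p, hp, hz⟩ => ⟨p.1.toNat, p, ⟨hp, Int.self_le_toNat _⟩, hz⟩,
      fun ⟨_, p, ⟨hp, _⟩, hz⟩ => ⟨p, hp, hz⟩⟩
  have hmono : Monotone S := fun M N hMN =>
    Set.biUnion_subset_biUnion_left fun p hp => ⟨hp.1, hp.2.trans (by exact_mod_cast hMN)⟩
  rw [hS, hmono.measure_iUnion]
  refine iSup_le fun N => ?_
  calc ν (S N) ≤ μ (S N) :=
        measure_biUnion_dyadicSquare_le_of_bdd (fun p hp => hp.2) fun p hp => h p hp.1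
    _ ≤ μ (⋃ N, S N) := measure_mono (Set.subset_iUnion S N)

lemma IsNormalizedYoung.le_self {Φ : ℝ → ℝ} (hΦ : IsNormalizedYoung Φ) {t : ℝ} (h0 : 0 ≤ t)
    (h1 : t ≤ 1) : Φ t ≤ t := by
  have h := hΦ.convex.2 Set.self_mem_Ici (Set.mem_Ici.2 zero_le_one) (sub_nonneg.2 h1) h0
    (sub_add_cancel 1 t)
  simpa [hΦ.map_zero, hΦ.map_one] using h

lemma setLIntegral_le_two_mul_of_lt {X : Type*} [MeasurableSpace X] {μ : Measure X}
    {g w : X → ℝ≥0∞} {D E : Set X} (hE : MeasurableSet E) (hw : Measurable w)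
    (hgw : ∀ z ∉ E, g z ≤ 2⁻¹ * w z) (hlt : ∫⁻ z in D, w z ∂μ < ∫⁻ z in D, g z ∂μ) :
    ∫⁻ z in D, w z ∂μ ≤ 2 * ∫⁻ z in D ∩ E, g z ∂μ := by
  set a := ∫⁻ z in D, w z ∂μ
  set c := ∫⁻ z in D ∩ E, g z ∂μ
  have hsmall : ∫⁻ z in D \ E, g z ∂μ ≤ a / 2 :=
    calc ∫⁻ z in D \ E, g z ∂μ ≤ ∫⁻ z in D \ E, 2⁻¹ * w z ∂μ :=
          setLIntegral_mono (hw.const_mul _) fun z hz => hgw z hz.2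
      _ = 2⁻¹ * ∫⁻ z in D \ E, w z ∂μ := lintegral_const_mul _ hw
      _ ≤ a / 2 := by
          rw [ENNReal.div_eq_inv_mul]
          gcongr
          exact lintegral_mono_set Set.sdiff_subset
  have hlt' : a / 2 + a / 2 < c + a / 2 := by
    rw [ENNReal.add_halves]
    calc a < ∫⁻ z in D, g z ∂μ := hlt
      _ = c + ∫⁻ z in D \ E, g z ∂μ := (lintegral_inter_add_sdiff g D hE).symm
      _ ≤ c + a / 2 := add_le_add_right hsmall c
  have hhalf : a / 2 < c :=
    (ENNReal.add_lt_add_iff_right (ENNReal.div_ne_top hlt.ne_top two_ne_zero)).1 hlt'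
  calc a = 2 * (a / 2) := (ENNReal.mul_div_cancel two_ne_zero ENNReal.ofNat_ne_top).symm
    _ ≤ 2 * c := by gcongr

lemma ofReal_mul_le_half_of_le_half {Φ : ℝ → ℝ} (hΦ : IsNormalizedYoung Φ) {s r : ℝ}
    (hs0 : 0 ≤ s) (hs : s ≤ 1 / 2) (hr : 0 ≤ r) :
    ENNReal.ofReal (Φ s * r) ≤ 2⁻¹ * ENNReal.ofReal r := by
  have hΦs : Φ s ≤ 2⁻¹ := (hΦ.le_self hs0 (hs.trans (by norm_num))).trans (hs.trans_eq (one_div 2))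
  calc ENNReal.ofReal (Φ s * r) ≤ ENNReal.ofReal (2⁻¹ * r) :=
        ENNReal.ofReal_le_ofReal (mul_le_mul_of_nonneg_right hΦs hr)
    _ = 2⁻¹ * ENNReal.ofReal r := by
      rw [ENNReal.ofReal_mul (by norm_num), ENNReal.ofReal_inv_of_pos two_pos, ENNReal.ofReal_ofNat]

lemma wvol_le_two_mul_of_one_lt_phiAverage {α : ℝ} {Φ : ℝ → ℝ} {ω : ℂ → ℝ} {f : ℂ → ℂ}
    {lam : ℝ} {Q : Set ℂ} (hΦ : IsNormalizedYoung Φ) (hωm : Measurable ω) (hω0 : ∀ z, 0 ≤ ω z)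
    (hf : Measurable f) (hlam : 0 < lam) (hQ : 1 < phiAverage α Φ ω f lam Q) :
    wvol α ω Q ≤ 2 * ∫⁻ z in Q ∩ {z | lam / 2 < ‖f z‖},
      ENNReal.ofReal (Φ (‖f z‖ / lam) * ω z) ∂(Vm α) := by
  refine setLIntegral_le_two_mul_of_lt (measurableSet_lt measurable_const hf.norm)
    hωm.ennreal_ofReal (fun z hz => ?_) (lt_of_not_ge fun h => ?_)
  · have hz : ‖f z‖ ≤ lam / 2 := not_lt.1 hz
    refine ofReal_mul_le_half_of_le_half hΦ (by positivity) ?_ (hω0 z)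
    rw [div_le_iff₀ hlam]
    linarith
  · exact hQ.not_ge (ENNReal.div_le_of_le_mul (by rwa [one_mul]))

lemma luxNorm_le_ofReal {α : ℝ} {Φ : ℝ → ℝ} {ω : ℂ → ℝ} {a b t : ℝ} {f : ℂ → ℂ} (ht : 0 < t)
    (h : phiAverage α Φ ω f t (Qbox a b) ≤ 1) : luxNorm α Φ ω a b f ≤ ENNReal.ofReal t :=
  iInf_le_of_le t <| iInf_le_of_le ht <| iInf_le _ h

lemma exists_dyadicSquare_one_lt_phiAverage {α : ℝ} {Φ : ℝ → ℝ} {ω : ℂ → ℝ} {f : ℂ → ℂ}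
    {lam : ℝ} {z : ℂ} (hlam : 0 < lam) (hz : ENNReal.ofReal lam < dyadicMax 0 α Φ ω f z) :
    ∃ p, z ∈ dyadicSquare p ∧ 1 < phiAverage α Φ ω f lam (dyadicSquare p) := by
  simp only [dyadicMax, lt_iSup_iff] at hz
  obtain ⟨I, ⟨j, m, h1, h2⟩, hzI, hlt⟩ := hz
  have hI : Qbox I.1 I.2 = dyadicSquare (j, m) := by
    simp only [h1, h2, dyadicSquare, mul_zero, add_zero]
  refine ⟨(j, m), hI ▸ hzI, not_le.1 fun hle => hlt.not_ge ?_⟩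
  exact luxNorm_le_ofReal hlam (hI ▸ hle)

theorem statement7_general (K : ℝ) :
    ∃ C : ℝ, 0 < C ∧ ∀ α : ℝ, -1 < α → ∀ ω : ℂ → ℝ, IsWeight α ω →
      ∀ Φ : ℝ → ℝ, IsNormalizedYoung Φ → Delta2 Φ K →
      ∀ f : ℂ → ℂ, Measurable f → HasCompactSupport f →
      ∀ lam : ℝ, 0 < lam →
      wvol α ω {z : ℂ | ENNReal.ofReal lam < dyadicMax 0 α Φ ω f z}
        ≤ ENNReal.ofReal C *
            ∫⁻ z in {z : ℂ | lam / 2 < ‖f z‖},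
              ENNReal.ofReal (Φ (‖f z‖ / lam) * ω z) ∂(Vm α) := by
  refine ⟨2, two_pos, fun α _ ω hω Φ hΦ _ f hf _ lam hlam => ?_⟩
  obtain ⟨hωm, hω0, -⟩ := hω
  set E := {z : ℂ | lam / 2 < ‖f z‖}
  set ν := (Vm α).withDensity fun z => ENNReal.ofReal (ω z)
  set μ := (2 : ℝ≥0∞) •
    ((Vm α).withDensity fun z => ENNReal.ofReal (Φ (‖f z‖ / lam) * ω z)).restrict E
  set B := {p | 1 < phiAverage α Φ ω f lam (dyadicSquare p)}
  have hB : ∀ p ∈ B, ν (dyadicSquare p) ≤ μ (dyadicSquare p) := fun p hp => by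
    rw [withDensity_apply' _ _, Measure.smul_apply, smul_eq_mul,
      Measure.restrict_apply (measurableSet_dyadicSquare p), withDensity_apply' _ _]
    exact wvol_le_two_mul_of_one_lt_phiAverage hΦ hωm hω0 hf hlam hp
  calc wvol α ω {z : ℂ | ENNReal.ofReal lam < dyadicMax 0 α Φ ω f z}
      ≤ ν (⋃ p ∈ B, dyadicSquare p) := by
        rw [withDensity_apply' _ _]
        refine lintegral_mono_set fun z hz => ?_
        obtain ⟨p, hzp, hp⟩ := exists_dyadicSquare_one_lt_phiAverage hlam hz
        exact Set.mem_biUnion hp hzp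
    _ ≤ μ (⋃ p ∈ B, dyadicSquare p) := measure_biUnion_dyadicSquare_le hB
    _ ≤ μ Set.univ := measure_mono (Set.subset_univ _)
    _ = _ := by
      rw [Measure.smul_apply, Measure.restrict_apply_univ, withDensity_apply' _ _, smul_eq_mul,
        ENNReal.ofReal_ofNat]

/-- Lemma 2.1, weak-type part: for `Φ` satisfying `Δ₂` with
constant `K`, there is `C > 0` depending only on `K` with
`|{M^d_{Φ,ω,α} f > λ}|_{ω,α} ≤ C ∫_{|f| > λ/2} Φ(|f|/λ) ω dV_α`. -/
theorem statement7 (K : ℝ) (hK : 1 < K) :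
    ∃ C : ℝ, 0 < C ∧ ∀ α : ℝ, -1 < α → ∀ ω : ℂ → ℝ, IsWeight α ω →
      ∀ Φ : ℝ → ℝ, IsNormalizedYoung Φ → Delta2 Φ K →
      ∀ f : ℂ → ℂ, Measurable f → HasCompactSupport f →
      ∀ lam : ℝ, 0 < lam →
      wvol α ω {z : ℂ | ENNReal.ofReal lam < dyadicMax 0 α Φ ω f z}
        ≤ ENNReal.ofReal C *
            ∫⁻ z in {z : ℂ | lam / 2 < ‖f z‖},
              ENNReal.ofReal (Φ (‖f z‖ / lam) * ω z) ∂(Vm α) :=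
  statement7_general K
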